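/- Let γ_n : [0,1] → ℝ^d be paths with a uniform Lipschitz constant 2L converging uniformly to γ : [0,1] → ℝ, and let φ : ℝ^d → ℝ be a continuous nonnegative function with compact support. Then ∫₀¹ φ(γ(t)) |γ′(t)| dt ≤ liminf_{n→∞} ∫₀¹ φ(γ_n(t)) |γ_n′(t)| dt. -/

import Mathlib

/-!
Cut `[a, b]` into short pieces. As `φ` is uniformly continuous and all paths are `K`-Lipschitz,
on each piece `φ ∘ γₙ` and `φ ∘ γ` stay within `ε` of their values at the left endpoint `pᵢ`.
Hence the weighted length of `γₙ` dominates the chord sum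
`∑ (φ (γₙ pᵢ) - ε)⁺ ‖γₙ pᵢ₊₁ - γₙ pᵢ‖`, which involves finitely many values of `γₙ` and so
converges to the same sum for `γ`. Conversely, on fine partitions the chords of `γ` add up to
its length up to `ε` (approximate `γ'` in `L¹` by a continuous function, which is almost constant
on short pieces), so that the chord sum of `γ` is its weighted length up to `O(ε)`.
-/

open MeasureTheory Filter Set intervalIntegral
open scoped NNReal Topology

variable {E : Type*} [NormedAddCommGroup E]

section LipschitzPath

variable [NormedSpace ℝ E] {f : ℝ → E} {K : ℝ≥0} {a b : ℝ}

theorem LipschitzOnWith.norm_deriv_le (hf : LipschitzOnWith K f (Icc a b)) {t : ℝ}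
    (ht : t ∈ Ioo a b) : ‖deriv f t‖ ≤ K :=
  norm_deriv_le_of_lipschitzOn (Icc_mem_nhds ht.1 ht.2) hf

variable [CompleteSpace E]

theorem LipschitzOnWith.intervalIntegrable_deriv (hf : LipschitzOnWith K f (Icc a b))
    (hab : a ≤ b) : IntervalIntegrable (deriv f) volume a b := by
  rw [intervalIntegrable_iff_integrableOn_Ioo_of_le hab]
  exact Measure.integrableOn_of_bounded (by simp) (stronglyMeasurable_deriv f).aestronglyMeasurable
    (ae_restrict_of_forall_mem measurableSet_Ioo fun t ht => hf.norm_deriv_le ht)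

theorem LipschitzOnWith.integral_norm_deriv_le (hf : LipschitzOnWith K f (Icc a b))
    (hab : a ≤ b) : ∫ t in a..b, ‖deriv f t‖ ≤ K * (b - a) := by
  have := integral_mono_on_of_le_Ioo hab (hf.intervalIntegrable_deriv hab).norm
    intervalIntegrable_const fun t ht => hf.norm_deriv_le ht
  simpa [mul_comm] using this

theorem LipschitzOnWith.integral_deriv_eq_sub [FiniteDimensional ℝ E]
    (hf : LipschitzOnWith K f (Icc a b)) (hab : a ≤ b) :
    ∫ t in a..b, deriv f t = f b - f a := by
  have hf' : LipschitzOnWith K f (uIcc a b) := uIcc_of_le hab ▸ hf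
  have hdiff :=
    hf'.absolutelyContinuousOnInterval.boundedVariationOn.ae_differentiableAt_of_mem_uIcc
  refine (SeparatingDual.eq_iff_forall_dual_eq (R := ℝ)).2 fun ℓ => ?_
  rw [← ℓ.intervalIntegral_comp_comm (hf.intervalIntegrable_deriv hab), map_sub]
  refine Eq.trans (integral_congr_ae ?_)
    (ℓ.lipschitz.comp_lipschitzOnWith hf').absolutelyContinuousOnInterval.integral_deriv_eq_sub
  filter_upwards [hdiff] with t ht htab
  exact ((ℓ.hasFDerivAt.comp_hasDerivAt t (ht (uIoc_subset_uIcc htab)).hasDerivAt).deriv).symm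

theorem LipschitzOnWith.norm_sub_le_integral_norm_deriv [FiniteDimensional ℝ E]
    (hf : LipschitzOnWith K f (Icc a b)) (hab : a ≤ b) :
    ‖f b - f a‖ ≤ ∫ t in a..b, ‖deriv f t‖ :=
  hf.integral_deriv_eq_sub hab ▸ norm_integral_le_integral_norm hab

variable {ρ : ℝ → ℝ}

theorem LipschitzOnWith.intervalIntegrable_mul_norm_deriv (hf : LipschitzOnWith K f (Icc a b))
    (hab : a ≤ b) (hρ : ContinuousOn ρ (Icc a b)) :
    IntervalIntegrable (fun t => ρ t * ‖deriv f t‖) volume a b :=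
  (hf.intervalIntegrable_deriv hab).norm.continuousOn_mul (uIcc_of_le hab ▸ hρ)

theorem LipschitzOnWith.integral_mul_norm_deriv_le (hf : LipschitzOnWith K f (Icc a b))
    (hab : a ≤ b) (hρ : ContinuousOn ρ (Icc a b)) {W : ℝ} (hρW : ∀ t ∈ Icc a b, ρ t ≤ W) :
    ∫ t in a..b, ρ t * ‖deriv f t‖ ≤ W * ∫ t in a..b, ‖deriv f t‖ := by
  rw [← intervalIntegral.integral_const_mul]
  exact integral_mono_on hab (hf.intervalIntegrable_mul_norm_deriv hab hρ)
    ((hf.intervalIntegrable_deriv hab).norm.const_mul W)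
    fun t ht => mul_le_mul_of_nonneg_right (hρW t ht) (norm_nonneg _)

theorem LipschitzOnWith.mul_norm_sub_le_integral [FiniteDimensional ℝ E]
    (hf : LipschitzOnWith K f (Icc a b)) (hab : a ≤ b) (hρ : ContinuousOn ρ (Icc a b)) {w : ℝ}
    (hw : 0 ≤ w) (hwρ : ∀ t ∈ Icc a b, w ≤ ρ t) :
    w * ‖f b - f a‖ ≤ ∫ t in a..b, ρ t * ‖deriv f t‖ := by
  calc w * ‖f b - f a‖ ≤ w * ∫ t in a..b, ‖deriv f t‖ :=
        mul_le_mul_of_nonneg_left (hf.norm_sub_le_integral_norm_deriv hab) hw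
    _ = ∫ t in a..b, w * ‖deriv f t‖ := (intervalIntegral.integral_const_mul _ _).symm
    _ ≤ ∫ t in a..b, ρ t * ‖deriv f t‖ :=
        integral_mono_on hab ((hf.intervalIntegrable_deriv hab).norm.const_mul w)
          (hf.intervalIntegrable_mul_norm_deriv hab hρ)
          fun t ht => mul_le_mul_of_nonneg_right (hwρ t ht) (norm_nonneg _)

end LipschitzPath

section Partition

variable [NormedSpace ℝ E] {p : ℕ → ℝ} {k i : ℕ}

theorem Monotone.Icc_subset_Icc_of_lt (hp : Monotone p) (hi : i < k) :
    Icc (p i) (p (i + 1)) ⊆ Icc (p 0) (p k) :=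
  Icc_subset_Icc (hp i.zero_le) (hp hi)

theorem Monotone.uIcc_subset_uIcc_of_lt (hp : Monotone p) (hi : i < k) :
    uIcc (p i) (p (i + 1)) ⊆ uIcc (p 0) (p k) := by
  rw [uIcc_of_le (hp i.le_succ), uIcc_of_le (hp k.zero_le)]
  exact hp.Icc_subset_Icc_of_lt hi

theorem Monotone.sum_integral_adjacent_intervals {g : ℝ → E} (hp : Monotone p)
    (hg : IntervalIntegrable g volume (p 0) (p k)) :
    ∑ i ∈ Finset.range k, ∫ t in p i..p (i + 1), g t = ∫ t in p 0..p k, g t :=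
  intervalIntegral.sum_integral_adjacent_intervals fun _ hi =>
    hg.mono_set (hp.uIcc_subset_uIcc_of_lt hi)

theorem exists_partition_mesh_lt {a b δ : ℝ} (hab : a ≤ b) (hδ : 0 < δ) :
    ∃ (p : ℕ → ℝ) (k : ℕ), Monotone p ∧ p 0 = a ∧ p k = b ∧ ∀ i, p (i + 1) - p i < δ := by
  obtain ⟨k, hk⟩ := exists_nat_gt ((b - a) / δ)
  have hk0 : (0 : ℝ) < k := (div_nonneg (sub_nonneg.2 hab) hδ.le).trans_lt hk
  refine ⟨fun i => a + i * ((b - a) / k), k, fun i j hij => ?_, by simp, by field_simp; ring,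
    fun i => ?_⟩
  · have : (i : ℝ) ≤ j := by exact_mod_cast hij
    dsimp only
    gcongr
  · rw [div_lt_iff₀ hδ] at hk
    have : a + ((i + 1 : ℕ) : ℝ) * ((b - a) / k) - (a + i * ((b - a) / k)) = (b - a) / k := by
      push_cast; ring
    rw [this, div_lt_iff₀ hk0]
    linarith

variable [CompleteSpace E] [FiniteDimensional ℝ E] {f : ℝ → E} {K : ℝ≥0} {ρ : ℝ → ℝ}
  {w : ℕ → ℝ}

theorem LipschitzOnWith.sum_mul_norm_sub_le_integral (hp : Monotone p)
    (hf : LipschitzOnWith K f (Icc (p 0) (p k))) (hρ : ContinuousOn ρ (Icc (p 0) (p k)))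
    (hw : ∀ i < k, 0 ≤ w i) (hwρ : ∀ i < k, ∀ t ∈ Icc (p i) (p (i + 1)), w i ≤ ρ t) :
    ∑ i ∈ Finset.range k, w i * ‖f (p (i + 1)) - f (p i)‖ ≤
      ∫ t in p 0..p k, ρ t * ‖deriv f t‖ := by
  rw [← hp.sum_integral_adjacent_intervals
    (hf.intervalIntegrable_mul_norm_deriv (hp k.zero_le) hρ)]
  refine Finset.sum_le_sum fun i hi => ?_
  have hi := Finset.mem_range.1 hi
  have hik := hp.Icc_subset_Icc_of_lt hi
  exact (hf.mono hik).mul_norm_sub_le_integral (hp i.le_succ) (hρ.mono hik) (hw i hi) (hwρ i hi)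

theorem LipschitzOnWith.integral_le_sum_mul_norm_sub_add (hp : Monotone p)
    (hf : LipschitzOnWith K f (Icc (p 0) (p k))) (hρ : ContinuousOn ρ (Icc (p 0) (p k)))
    {M η : ℝ} (hwM : ∀ i < k, w i ≤ M)
    (hρw : ∀ i < k, ∀ t ∈ Icc (p i) (p (i + 1)), ρ t ≤ w i + η) :
    ∫ t in p 0..p k, ρ t * ‖deriv f t‖ ≤
      ∑ i ∈ Finset.range k, w i * ‖f (p (i + 1)) - f (p i)‖ +
        M * ((∫ t in p 0..p k, ‖deriv f t‖) - ∑ i ∈ Finset.range k, ‖f (p (i + 1)) - f (p i)‖) +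
        η * ∫ t in p 0..p k, ‖deriv f t‖ := by
  have hpiece : ∀ i ∈ Finset.range k, ∫ t in p i..p (i + 1), ρ t * ‖deriv f t‖ ≤
      w i * ‖f (p (i + 1)) - f (p i)‖ +
        M * ((∫ t in p i..p (i + 1), ‖deriv f t‖) - ‖f (p (i + 1)) - f (p i)‖) +
        η * ∫ t in p i..p (i + 1), ‖deriv f t‖ := by
    intro i hi
    have hik := hp.Icc_subset_Icc_of_lt (Finset.mem_range.1 hi)
    have hchord := (hf.mono hik).norm_sub_le_integral_norm_deriv (hp i.le_succ)
    have := (hf.mono hik).integral_mul_norm_deriv_le (hp i.le_succ) (hρ.mono hik)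
      (hρw i (Finset.mem_range.1 hi))
    nlinarith [mul_nonneg (sub_nonneg.2 (hwM i (Finset.mem_range.1 hi))) (sub_nonneg.2 hchord)]
  rw [← hp.sum_integral_adjacent_intervals
      (hf.intervalIntegrable_mul_norm_deriv (hp k.zero_le) hρ),
    ← hp.sum_integral_adjacent_intervals (hf.intervalIntegrable_deriv (hp k.zero_le)).norm]
  refine (Finset.sum_le_sum hpiece).trans_eq ?_
  simp only [Finset.sum_add_distrib, ← Finset.mul_sum, Finset.sum_sub_distrib]

end Partition

section ChordSum

variable [NormedSpace ℝ E] [CompleteSpace E] {g : ℝ → E} {a b : ℝ}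

theorem integral_norm_le_norm_integral_add_integral_norm_sub (hab : a ≤ b)
    (hg : IntervalIntegrable g volume a b) (v : E) :
    ∫ t in a..b, ‖g t‖ ≤ ‖∫ t in a..b, g t‖ + 2 * ∫ t in a..b, ‖g t - v‖ := by
  have hgv : IntervalIntegrable (fun t => g t - v) volume a b := hg.sub intervalIntegrable_const
  have hnorm : ∫ t in a..b, ‖g t‖ ≤ (b - a) * ‖v‖ + ∫ t in a..b, ‖g t - v‖ := by
    calc ∫ t in a..b, ‖g t‖ ≤ ∫ t in a..b, (‖v‖ + ‖g t - v‖) :=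
          integral_mono_on hab hg.norm (intervalIntegrable_const.add hgv.norm)
            fun t _ => norm_le_insert' (g t) v
      _ = (b - a) * ‖v‖ + ∫ t in a..b, ‖g t - v‖ := by
          rw [integral_add intervalIntegrable_const hgv.norm, intervalIntegral.integral_const,
            smul_eq_mul]
  have hconst : (b - a) * ‖v‖ ≤ ‖∫ t in a..b, g t‖ + ∫ t in a..b, ‖g t - v‖ := by
    have : (b - a) • v = (∫ t in a..b, g t) - ∫ t in a..b, (g t - v) := by
      rw [integral_sub hg intervalIntegrable_const, intervalIntegral.integral_const,
        sub_sub_cancel]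
    calc (b - a) * ‖v‖ = ‖(b - a) • v‖ := by
          rw [norm_smul, Real.norm_of_nonneg (sub_nonneg.2 hab)]
      _ ≤ ‖∫ t in a..b, g t‖ + ‖∫ t in a..b, (g t - v)‖ := this ▸ norm_sub_le _ _
      _ ≤ ‖∫ t in a..b, g t‖ + ∫ t in a..b, ‖g t - v‖ := by
          gcongr; exact norm_integral_le_integral_norm hab
  linarith

theorem integral_norm_le_norm_integral_add_of_norm_sub_le (hab : a ≤ b)
    (hg : IntervalIntegrable g volume a b) {c : ℝ → E} (hc : IntervalIntegrable c volume a b)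
    {η : ℝ} (hcη : ∀ t ∈ Icc a b, ‖c t - c a‖ ≤ η) :
    ∫ t in a..b, ‖g t‖ ≤
      ‖∫ t in a..b, g t‖ + 2 * ((∫ t in a..b, ‖g t - c t‖) + (b - a) * η) := by
  refine (integral_norm_le_norm_integral_add_integral_norm_sub hab hg (c a)).trans ?_
  gcongr
  have hgc : IntervalIntegrable (fun t => ‖g t - c t‖) volume a b := (hg.sub hc).norm
  calc ∫ t in a..b, ‖g t - c a‖ ≤ ∫ t in a..b, (‖g t - c t‖ + η) :=
        integral_mono_on hab (hg.sub intervalIntegrable_const).norm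
          (hgc.add intervalIntegrable_const) fun t ht =>
            (norm_sub_le_norm_sub_add_norm_sub _ (c t) _).trans (add_le_add_right (hcη t ht) _)
    _ = (∫ t in a..b, ‖g t - c t‖) + (b - a) * η := by
        rw [integral_add hgc intervalIntegrable_const, intervalIntegral.integral_const,
          smul_eq_mul]

theorem IntervalIntegrable.exists_integral_norm_le_sum_norm_integral (hab : a ≤ b)
    (hg : IntervalIntegrable g volume a b) {ε : ℝ} (hε : 0 < ε) :
    ∃ δ > 0, ∀ (p : ℕ → ℝ) (k : ℕ), Monotone p → p 0 = a → p k = b →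
      (∀ i < k, p (i + 1) - p i < δ) →
      ∫ t in a..b, ‖g t‖ ≤ ∑ i ∈ Finset.range k, ‖∫ t in p i..p (i + 1), g t‖ + ε := by
  obtain ⟨c, hc_supp, hgc, hc_cont, -⟩ := by
    haveI := Measure.Regular.restrict_of_measure_ne_top (μ := volume) (A := Ioc a b) (by simp)
    exact hg.1.exists_hasCompactSupport_integral_sub_le (show 0 < ε / 4 by positivity)
  rw [← integral_of_le hab] at hgc
  obtain ⟨η, hη, hηab⟩ := exists_pos_mul_lt (show 0 < ε / 4 by positivity) (b - a)
  obtain ⟨δ, hδ, hcδ⟩ := Metric.uniformContinuous_iff.1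
    (hc_cont.uniformContinuous_of_tendsto_cocompact hc_supp.is_zero_at_infty) η hη
  refine ⟨δ, hδ, ?_⟩
  rintro p k hp rfl rfl hmesh
  have hgc_int : IntervalIntegrable (fun t => ‖g t - c t‖) volume (p 0) (p k) :=
    (hg.sub (hc_cont.intervalIntegrable _ _)).norm
  have hpiece : ∀ i ∈ Finset.range k, ∫ t in p i..p (i + 1), ‖g t‖ ≤
      ‖∫ t in p i..p (i + 1), g t‖ +
        2 * ((∫ t in p i..p (i + 1), ‖g t - c t‖) + (p (i + 1) - p i) * η) := by
    intro i hi
    refine integral_norm_le_norm_integral_add_of_norm_sub_le (hp i.le_succ)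
      (hg.mono_set (hp.uIcc_subset_uIcc_of_lt (Finset.mem_range.1 hi)))
      (hc_cont.intervalIntegrable _ _) fun t ht => ?_
    rw [← dist_eq_norm]
    refine (hcδ ?_).le
    rw [Real.dist_eq, abs_of_nonneg (sub_nonneg.2 ht.1)]
    linarith [ht.2, hmesh i (Finset.mem_range.1 hi)]
  rw [← hp.sum_integral_adjacent_intervals hg.norm]
  refine (Finset.sum_le_sum hpiece).trans ?_
  rw [Finset.sum_add_distrib, ← Finset.mul_sum, Finset.sum_add_distrib, ← Finset.sum_mul,
    Finset.sum_range_sub, hp.sum_integral_adjacent_intervals hgc_int]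
  linarith

end ChordSum

section WeightedChordSum

variable {φ : E → ℝ} {ε : ℝ} {p : ℕ → ℝ} {k : ℕ} {f : ℝ → E} {K : ℝ≥0}

/-- The weight `(φ (f (p i)) - ε)⁺` is a nonnegative lower bound for `φ ∘ f` on the `i`-th piece
as soon as `φ ∘ f` oscillates there by less than `ε`. -/
def weightedChordSum (φ : E → ℝ) (ε : ℝ) (p : ℕ → ℝ) (k : ℕ) (f : ℝ → E) : ℝ :=
  ∑ i ∈ Finset.range k, max (φ (f (p i)) - ε) 0 * ‖f (p (i + 1)) - f (p i)‖

theorem tendsto_weightedChordSum {ι : Type*} {l : Filter ι} {fs : ι → ℝ → E}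
    (hφ : Continuous φ) (hconv : ∀ i ≤ k, Tendsto (fun n => fs n (p i)) l (𝓝 (f (p i)))) :
    Tendsto (fun n => weightedChordSum φ ε p k (fs n)) l (𝓝 (weightedChordSum φ ε p k f)) := by
  refine tendsto_finsetSum _ fun i hi => ?_
  have hi : i < k := Finset.mem_range.1 hi
  exact (((hφ.tendsto _).comp (hconv i hi.le)).sub_const ε |>.max tendsto_const_nhds).mul
    ((hconv (i + 1) hi).sub (hconv i hi.le)).norm

theorem LipschitzOnWith.abs_comp_sub_lt_of_mesh (hp : Monotone p)
    (hf : LipschitzOnWith K f (Icc (p 0) (p k))) {δ : ℝ}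
    (hφδ : ∀ ⦃x y⦄, dist x y < δ → dist (φ x) (φ y) < ε)
    (hmesh : ∀ i < k, K * (p (i + 1) - p i) < δ) :
    ∀ i < k, ∀ t ∈ Icc (p i) (p (i + 1)), |φ (f t) - φ (f (p i))| < ε := by
  intro i hi t ht
  rw [← Real.dist_eq]
  refine hφδ ((hf.dist_le_mul _ (hp.Icc_subset_Icc_of_lt hi ht) _
    (hp.Icc_subset_Icc_of_lt hi (left_mem_Icc.2 (hp i.le_succ)))).trans_lt ?_)
  rw [Real.dist_eq, abs_of_nonneg (sub_nonneg.2 ht.1)]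
  exact lt_of_le_of_lt (by gcongr; exact ht.2) (hmesh i hi)

variable [NormedSpace ℝ E] [CompleteSpace E] [FiniteDimensional ℝ E]

theorem LipschitzOnWith.weightedChordSum_le_integral (hp : Monotone p)
    (hf : LipschitzOnWith K f (Icc (p 0) (p k))) (hφ : Continuous φ) (hφ0 : ∀ x, 0 ≤ φ x)
    (hosc : ∀ i < k, ∀ t ∈ Icc (p i) (p (i + 1)), |φ (f t) - φ (f (p i))| < ε) :
    weightedChordSum φ ε p k f ≤ ∫ t in p 0..p k, φ (f t) * ‖deriv f t‖ :=
  hf.sum_mul_norm_sub_le_integral hp (hφ.comp_continuousOn hf.continuousOn)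
    (fun _ _ => le_max_right _ _) fun i hi t ht =>
      max_le (by linarith [(abs_lt.1 (hosc i hi t ht)).1]) (hφ0 _)

theorem LipschitzOnWith.integral_le_weightedChordSum_add (hp : Monotone p)
    (hf : LipschitzOnWith K f (Icc (p 0) (p k))) (hφ : Continuous φ) (hφ0 : ∀ x, 0 ≤ φ x)
    {M : ℝ} (hφM : ∀ x, φ x ≤ M)
    (hosc : ∀ i < k, ∀ t ∈ Icc (p i) (p (i + 1)), |φ (f t) - φ (f (p i))| < ε) :
    ∫ t in p 0..p k, φ (f t) * ‖deriv f t‖ ≤ weightedChordSum φ ε p k f +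
      M * ((∫ t in p 0..p k, ‖deriv f t‖) - ∑ i ∈ Finset.range k, ‖f (p (i + 1)) - f (p i)‖) +
      2 * ε * ∫ t in p 0..p k, ‖deriv f t‖ :=
  hf.integral_le_sum_mul_norm_sub_add hp (hφ.comp_continuousOn hf.continuousOn)
    (fun i hi => max_le (by
        linarith [hφM (f (p i)),
          (abs_nonneg _).trans_lt (hosc i hi (p i) (left_mem_Icc.2 (hp i.le_succ)))])
      ((hφ0 (f (p i))).trans (hφM _)))
    fun i hi t ht => by
      show φ (f t) ≤ _
      linarith [(abs_lt.1 (hosc i hi t ht)).2, le_max_left (φ (f (p i)) - ε) 0]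

end WeightedChordSum

theorem le_liminf_of_tendsto_of_le {ι : Type*} {l : Filter ι} [l.NeBot] {u v : ι → ℝ} {s C : ℝ}
    (hu : Tendsto u l (𝓝 s)) (huv : ∀ n, u n ≤ v n) (hvC : ∀ n, v n ≤ C) : s ≤ liminf v l :=
  hu.liminf_eq ▸ liminf_le_liminf (Eventually.of_forall huv) hu.isBoundedUnder_ge
    (isCoboundedUnder_ge_of_le l hvC)

section LowerSemicontinuity

variable [NormedSpace ℝ E] [CompleteSpace E] [FiniteDimensional ℝ E] {a b : ℝ} {K : ℝ≥0}
  {γs : ℕ → ℝ → E} {γ : ℝ → E} {φ : E → ℝ} {M : ℝ}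

theorem integral_le_liminf_add (hab : a ≤ b) (hγs : ∀ n, LipschitzOnWith K (γs n) (Icc a b))
    (hγ : LipschitzOnWith K γ (Icc a b))
    (hconv : ∀ t ∈ Icc a b, Tendsto (fun n => γs n t) atTop (𝓝 (γ t)))
    (hφ : UniformContinuous φ) (hφ0 : ∀ x, 0 ≤ φ x) (hφM : ∀ x, φ x ≤ M) {ε : ℝ} (hε : 0 < ε) :
    ∫ t in a..b, φ (γ t) * ‖deriv γ t‖ ≤
      liminf (fun n => ∫ t in a..b, φ (γs n t) * ‖deriv (γs n) t‖) atTop +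
        (M + 2 * ∫ t in a..b, ‖deriv γ t‖) * ε := by
  have hM : 0 ≤ M := (hφ0 0).trans (hφM 0)
  obtain ⟨δ, hδ, hφδ⟩ := Metric.uniformContinuous_iff.1 hφ ε hε
  obtain ⟨δ', hδ', hchord⟩ :=
    (hγ.intervalIntegrable_deriv hab).exists_integral_norm_le_sum_norm_integral hab hε
  obtain ⟨p, k, hp, rfl, rfl, hmesh⟩ :=
    exists_partition_mesh_lt hab (lt_min hδ' (div_pos hδ (by positivity : (0 : ℝ) < K + 1)))
  have hKmesh : ∀ i < k, K * (p (i + 1) - p i) < δ := fun i _ => by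
    calc K * (p (i + 1) - p i) ≤ K * (δ / (K + 1)) := by
          gcongr; exact ((hmesh i).trans_le (min_le_right _ _)).le
      _ < δ := by
          rw [mul_div_assoc', div_lt_iff₀ (by positivity)]
          nlinarith
  have hchord_sum : (∫ t in p 0..p k, ‖deriv γ t‖) -
      ∑ i ∈ Finset.range k, ‖γ (p (i + 1)) - γ (p i)‖ ≤ ε := by
    have := hchord p k hp rfl rfl fun i _ => (hmesh i).trans_le (min_le_left _ _)
    rw [Finset.sum_congr rfl fun i hi => congrArg norm <| (hγ.mono (hp.Icc_subset_Icc_of_lt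
      (Finset.mem_range.1 hi))).integral_deriv_eq_sub (hp i.le_succ)] at this
    linarith
  have hS : weightedChordSum φ ε p k γ ≤
      liminf (fun n => ∫ t in p 0..p k, φ (γs n t) * ‖deriv (γs n) t‖) atTop :=
    le_liminf_of_tendsto_of_le (tendsto_weightedChordSum hφ.continuous
      fun i hi => hconv (p i) ⟨hp i.zero_le, hp hi⟩)
      (fun n => (hγs n).weightedChordSum_le_integral hp hφ.continuous hφ0
        ((hγs n).abs_comp_sub_lt_of_mesh hp hφδ hKmesh))
      fun n => ((hγs n).integral_mul_norm_deriv_le hab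
        (hφ.continuous.comp_continuousOn (hγs n).continuousOn) fun t _ => hφM _).trans
          (mul_le_mul_of_nonneg_left ((hγs n).integral_norm_deriv_le hab) hM)
  have hupper := hγ.integral_le_weightedChordSum_add hp hφ.continuous hφ0 hφM
    (hγ.abs_comp_sub_lt_of_mesh hp hφδ hKmesh)
  nlinarith [mul_le_mul_of_nonneg_left hchord_sum hM]

theorem integral_mul_norm_deriv_le_liminf (hab : a ≤ b)
    (hγs : ∀ n, LipschitzOnWith K (γs n) (Icc a b)) (hγ : LipschitzOnWith K γ (Icc a b))
    (hconv : ∀ t ∈ Icc a b, Tendsto (fun n => γs n t) atTop (𝓝 (γ t)))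
    (hφ : UniformContinuous φ) (hφ0 : ∀ x, 0 ≤ φ x) (hφM : ∀ x, φ x ≤ M) :
    ∫ t in a..b, φ (γ t) * ‖deriv γ t‖ ≤
      liminf (fun n => ∫ t in a..b, φ (γs n t) * ‖deriv (γs n) t‖) atTop := by
  refine ge_of_tendsto ?_ (eventually_nhdsWithin_of_forall (a := (0 : ℝ)) (s := Ioi 0)
    fun ε hε => integral_le_liminf_add hab hγs hγ hconv hφ hφ0 hφM (mem_Ioi.1 hε))
  refine tendsto_nhdsWithin_of_tendsto_nhds ?_
  simpa using ((tendsto_id (x := 𝓝 (0 : ℝ))).const_mul _).const_add _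

end LowerSemicontinuity

theorem stmt_8_general (d : ℕ) (L : ℝ)
    (γs : ℕ → ℝ → EuclideanSpace ℝ (Fin d)) (γ : ℝ → EuclideanSpace ℝ (Fin d))
    (hγs : ∀ n, LipschitzOnWith (Real.toNNReal (2 * L)) (γs n) (Set.Icc 0 1))
    (hγ : LipschitzOnWith (Real.toNNReal (2 * L)) γ (Set.Icc 0 1))
    (hconv : TendstoUniformlyOn γs γ atTop (Set.Icc 0 1))
    (φ : EuclideanSpace ℝ (Fin d) → ℝ)
    (hφc : Continuous φ) (hφ0 : ∀ x, 0 ≤ φ x) (hφs : HasCompactSupport φ) :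
    (∫ t in (0:ℝ)..1, φ (γ t) * ‖deriv γ t‖) ≤
      Filter.liminf (fun n => ∫ t in (0:ℝ)..1, φ (γs n t) * ‖deriv (γs n) t‖) atTop := by
  obtain ⟨x₀, hφx₀⟩ := hφc.exists_forall_ge_of_hasCompactSupport hφs
  exact integral_mul_norm_deriv_le_liminf zero_le_one hγs hγ (fun t ht => hconv.tendsto_at ht)
    (hφc.uniformContinuous_of_tendsto_cocompact hφs.is_zero_at_infty) hφ0 hφx₀

theorem stmt_8 (d : ℕ) (L : ℝ) (hL : 0 < L)
    (γs : ℕ → ℝ → EuclideanSpace ℝ (Fin d)) (γ : ℝ → EuclideanSpace ℝ (Fin d))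
    (hγs : ∀ n, LipschitzOnWith (Real.toNNReal (2 * L)) (γs n) (Set.Icc 0 1))
    (hγ : LipschitzOnWith (Real.toNNReal (2 * L)) γ (Set.Icc 0 1))
    (hconv : TendstoUniformlyOn γs γ atTop (Set.Icc 0 1))
    (φ : EuclideanSpace ℝ (Fin d) → ℝ)
    (hφc : Continuous φ) (hφ0 : ∀ x, 0 ≤ φ x) (hφs : HasCompactSupport φ) :
    (∫ t in (0:ℝ)..1, φ (γ t) * ‖deriv γ t‖) ≤
      Filter.liminf (fun n => ∫ t in (0:ℝ)..1, φ (γs n t) * ‖deriv (γs n) t‖) atTop :=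
  stmt_8_general d L γs γ hγs hγ hconv φ hφc hφ0 hφs
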